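/- Let T have the wandering subspace property and suppose w is a bounded point evaluation for T. Then H is the closed linear span of ⋃_{n∈ℕ} (T − w)^n (ker T*), and consequently the orthogonal projection P_w onto ker(T* − w̄) maps ker T* onto ker(T* − w̄). -/

import Mathlib

/-!
The span of `⋃ₙ Tⁿ(ker T*)` is the smallest `T`-invariant subspace containing `ker T*`, and a
subspace is `T`-invariant iff it is `(T - w)`-invariant; this gives the first claim.
For the second, the estimate `‖p(w)‖ ≤ c ‖p(T)‖` lets `p(T) ↦ p(w)` extend, by density of the
`p(T)`, to a bounded operator `E : H → ker T*`. For `z ∈ ker(T* - w̄)` we have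
`⟪z, Tⁿ x⟫ = wⁿ ⟪z, x⟫`, hence `⟪z, p(T)⟫ = ⟪z, p(w)⟫`, and by density `⟪z, E y - y⟫ = 0` for every
`y`; so `x = E y` is the required element of `ker T*`.
-/

open ContinuousLinearMap Submodule Filter

noncomputable section

variable {H : Type*} [NormedAddCommGroup H] [InnerProductSpace ℂ H] [CompleteSpace H]

/-- The wandering subspace `ker T*`. -/
def kerAdj (T : H →L[ℂ] H) : Submodule ℂ H := LinearMap.ker ((ContinuousLinearMap.adjoint T : H →L[ℂ] H) : H →ₗ[ℂ] H)

/-- `T` has the wandering subspace property: the closed linear span of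
`⋃ₙ Tⁿ(ker T*)` is all of `H`. -/
def WSP (T : H →L[ℂ] H) : Prop :=
  (⨆ n : ℕ, (kerAdj T).map (((T ^ n : H →L[ℂ] H)) : H →ₗ[ℂ] H)).topologicalClosure = ⊤

/-- `w` is a bounded point evaluation for `T`: `‖p(w)‖ ≤ c ‖p(T)‖` for all
`ker T*`-valued polynomials `p`, where `p(T) = Σ Tⁿ xₙ` for `p(z) = Σ xₙ zⁿ`. -/
def IsBPE (T : H →L[ℂ] H) (w : ℂ) : Prop :=
  ∃ c > (0 : ℝ), ∀ (k : ℕ) (x : ℕ → H), (∀ n, x n ∈ kerAdj T) →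
    ‖∑ n ∈ Finset.range (k + 1), w ^ n • x n‖ ≤
      c * ‖∑ n ∈ Finset.range (k + 1), (T ^ n) (x n)‖

/-- `E` is the (continuous extension of the) evaluation operator at `w`:
it takes values in `ker T*` and sends `p(T)` to `p(w)`. -/
def IsEval (T : H →L[ℂ] H) (w : ℂ) (E : H →L[ℂ] H) : Prop :=
  (∀ y, E y ∈ kerAdj T) ∧
    ∀ (k : ℕ) (x : ℕ → H), (∀ n, x n ∈ kerAdj T) →
      E (∑ n ∈ Finset.range (k + 1), (T ^ n) (x n)) =
        ∑ n ∈ Finset.range (k + 1), w ^ n • x n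

local notation "⟪" x ", " y "⟫" => @inner ℂ _ _ x y

namespace Module.End

variable {R M : Type*} [CommRing R] [AddCommGroup M] [Module R M]

theorem invtSubmodule_le_invtSubmodule_sub_smul_one (f : Module.End R M) (a : R) :
    f.invtSubmodule ≤ (f - a • 1).invtSubmodule := by
  intro p hp
  rw [mem_invtSubmodule_iff_forall_mem_of_mem] at hp ⊢
  intro x hx
  simpa using p.sub_mem (hp x hx) (p.smul_mem a hx)

theorem invtSubmodule_sub_smul_one (f : Module.End R M) (a : R) :
    (f - a • 1).invtSubmodule = f.invtSubmodule := by
  refine le_antisymm ?_ (invtSubmodule_le_invtSubmodule_sub_smul_one f a)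
  have := invtSubmodule_le_invtSubmodule_sub_smul_one (f - a • 1) (-a)
  rwa [neg_smul, sub_neg_eq_add, sub_add_cancel] at this

theorem le_iSup_map_pow (f : Module.End R M) (E : Submodule R M) :
    E ≤ ⨆ n : ℕ, E.map (f ^ n) :=
  le_iSup_of_le 0 (by rw [pow_zero, one_eq_id, Submodule.map_id])

theorem iSup_map_pow_mem_invtSubmodule (f : Module.End R M) (E : Submodule R M) :
    ⨆ n : ℕ, E.map (f ^ n) ∈ f.invtSubmodule := by
  rw [mem_invtSubmodule_iff_map_le, Submodule.map_iSup]
  refine iSup_le fun n => ?_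
  rw [← Submodule.map_comp, ← mul_eq_comp, ← pow_succ']
  exact le_iSup (fun n => E.map (f ^ n)) (n + 1)

theorem iSup_map_pow_le {f : Module.End R M} {E N : Submodule R M} (hE : E ≤ N)
    (hN : N ∈ f.invtSubmodule) : ⨆ n : ℕ, E.map (f ^ n) ≤ N := by
  refine iSup_le fun n => ?_
  induction n with
  | zero => rwa [pow_zero, one_eq_id, Submodule.map_id]
  | succ n ih =>
    rw [pow_succ', mul_eq_comp, Submodule.map_comp]
    exact ((mem_invtSubmodule_iff_map_le f).1 hN).trans' (Submodule.map_mono ih)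

theorem iSup_map_pow_sub_smul_one (f : Module.End R M) (a : R) (E : Submodule R M) :
    ⨆ n : ℕ, E.map ((f - a • 1) ^ n) = ⨆ n : ℕ, E.map (f ^ n) := by
  apply le_antisymm <;> refine iSup_map_pow_le (le_iSup_map_pow _ E) ?_
  · rw [invtSubmodule_sub_smul_one]
    exact iSup_map_pow_mem_invtSubmodule f E
  · rw [← invtSubmodule_sub_smul_one f a]
    exact iSup_map_pow_mem_invtSubmodule _ E

end Module.End

/-- An `E`-valued polynomial `p = ∑ pₙ zⁿ` is encoded by its coefficients `p : ℕ →₀ E`;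
`evalOp T E p = p(T) = ∑ Tⁿ pₙ`. -/
def evalOp {R M : Type*} [CommSemiring R] [AddCommMonoid M] [Module R M] (T : Module.End R M)
    (E : Submodule R M) : (ℕ →₀ E) →ₗ[R] M :=
  Finsupp.lsum R fun n => (T ^ n) ∘ₗ E.subtype

def evalPoint {R : Type*} (E : Type*) [CommSemiring R] [AddCommMonoid E] [Module R E] (w : R) :
    (ℕ →₀ E) →ₗ[R] E :=
  Finsupp.lsum R fun n => w ^ n • LinearMap.id

theorem Finsupp.support_subset_range_sup_succ {M : Type*} [Zero M] (p : ℕ →₀ M) :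
    p.support ⊆ Finset.range (p.support.sup id + 1) := fun _ hn =>
  Finset.mem_range_succ_iff.2 (Finset.le_sup (f := id) hn)

section evalOp

variable {R M : Type*} [CommSemiring R] [AddCommMonoid M] [Module R M] (T : Module.End R M)
  (E : Submodule R M)

@[simp]
theorem evalOp_single (n : ℕ) (x : E) : evalOp T E (Finsupp.single n x) = (T ^ n) x := by
  simp [evalOp]

theorem evalOp_eq_sum_range {p : ℕ →₀ E} {k : ℕ} (hp : p.support ⊆ Finset.range (k + 1)) :
    evalOp T E p = ∑ n ∈ Finset.range (k + 1), (T ^ n) (p n) := by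
  rw [evalOp, Finsupp.lsum_apply, Finsupp.sum_of_support_subset p hp _ (by simp)]
  rfl

theorem iSup_map_pow_le_range_evalOp :
    ⨆ n : ℕ, E.map (T ^ n) ≤ LinearMap.range (evalOp T E) :=
  iSup_le fun n => by
    rintro _ ⟨x, hx, rfl⟩
    exact ⟨Finsupp.single n ⟨x, hx⟩, evalOp_single T E n _⟩

end evalOp

section evalPoint

variable {R E : Type*} [CommSemiring R] [AddCommMonoid E] [Module R E] (w : R)

@[simp]
theorem evalPoint_single (n : ℕ) (x : E) : evalPoint E w (Finsupp.single n x) = w ^ n • x := by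
  simp [evalPoint]

theorem evalPoint_eq_sum_range {p : ℕ →₀ E} {k : ℕ} (hp : p.support ⊆ Finset.range (k + 1)) :
    evalPoint E w p = ∑ n ∈ Finset.range (k + 1), w ^ n • p n := by
  rw [evalPoint, Finsupp.lsum_apply, Finsupp.sum_of_support_subset p hp _ (by simp)]
  rfl

end evalPoint

theorem ContinuousLinearMap.toLinearMap_pow_apply {R M : Type*} [Semiring R] [AddCommMonoid M]
    [Module R M] [TopologicalSpace M] (T : M →L[R] M) (n : ℕ) (x : M) :
    ((T : M →ₗ[R] M) ^ n) x = (T ^ n) x := by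
  rw [← ContinuousLinearMap.toLinearMap_pow, ContinuousLinearMap.coe_coe]

instance completeSpace_kerAdj (T : H →L[ℂ] H) : CompleteSpace (kerAdj T) :=
  ContinuousLinearMap.completeSpace_ker _

theorem WSP.denseRange_evalOp {T : H →L[ℂ] H} (hT : WSP T) :
    DenseRange (evalOp (T : H →ₗ[ℂ] H) (kerAdj T)) := by
  rw [WSP, ← Submodule.dense_iff_topologicalClosure_eq_top] at hT
  simp only [ContinuousLinearMap.toLinearMap_pow] at hT
  exact hT.mono (iSup_map_pow_le_range_evalOp _ _)

theorem IsBPE.exists_norm_evalPoint_le {T : H →L[ℂ] H} {w : ℂ} (hw : IsBPE T w) :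
    ∃ c, ∀ p, ‖evalPoint (kerAdj T) w p‖ ≤ c * ‖evalOp (T : H →ₗ[ℂ] H) (kerAdj T) p‖ := by
  obtain ⟨c, -, hc⟩ := hw
  refine ⟨c, fun p => ?_⟩
  have hp := p.support_subset_range_sup_succ
  rw [evalOp_eq_sum_range _ _ hp, evalPoint_eq_sum_range _ hp, Submodule.coe_norm,
    Submodule.coe_sum]
  simp only [ContinuousLinearMap.toLinearMap_pow_apply]
  exact hc _ (fun n => p n) (fun n => (p n).2)

theorem IsEval.apply_evalOp {T E : H →L[ℂ] H} {w : ℂ} (hE : IsEval T w E) (p : ℕ →₀ kerAdj T) :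
    E (evalOp (T : H →ₗ[ℂ] H) (kerAdj T) p) = evalPoint (kerAdj T) w p := by
  have hp := p.support_subset_range_sup_succ
  simp only [evalOp_eq_sum_range _ _ hp, evalPoint_eq_sum_range _ hp, Submodule.coe_sum,
    Submodule.coe_smul, ContinuousLinearMap.toLinearMap_pow_apply]
  exact hE.2 _ (fun n => p n) (fun n => (p n).2)

theorem IsBPE.exists_isEval {T : H →L[ℂ] H} {w : ℂ} (hT : WSP T) (hw : IsBPE T w) :
    ∃ E, IsEval T w E := by
  obtain ⟨c, hc⟩ := hw.exists_norm_evalPoint_le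
  let Φ : H →L[ℂ] kerAdj T :=
    (evalPoint (kerAdj T) w).extendOfNorm (evalOp (T : H →ₗ[ℂ] H) (kerAdj T))
  have hΦ : ∀ p, Φ (evalOp (T : H →ₗ[ℂ] H) (kerAdj T) p) = evalPoint (kerAdj T) w p :=
    LinearMap.extendOfNorm_eq hT.denseRange_evalOp ⟨c, hc⟩
  refine ⟨(kerAdj T).subtypeL ∘L Φ, fun y => (Φ y).2, fun k x hx => ?_⟩
  let p : ℕ →₀ kerAdj T := ∑ n ∈ Finset.range (k + 1), Finsupp.single n ⟨x n, hx n⟩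
  have hp : evalOp (T : H →ₗ[ℂ] H) (kerAdj T) p = ∑ n ∈ Finset.range (k + 1), (T ^ n) (x n) := by
    simp [p, ContinuousLinearMap.toLinearMap_pow_apply]
  rw [← hp, ContinuousLinearMap.comp_apply, hΦ]
  simp [p]

theorem inner_evalOp_eq_inner_evalPoint {T : H →L[ℂ] H} {w : ℂ} {z : H}
    (hz : ContinuousLinearMap.adjoint T z = starRingEnd ℂ w • z) (E : Submodule ℂ H)
    (p : ℕ →₀ E) :
    ⟪z, evalOp (T : H →ₗ[ℂ] H) E p⟫ = ⟪z, (evalPoint E w p : H)⟫ := by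
  have hpow : ∀ n (x : H), ⟪z, (T ^ n) x⟫ = w ^ n * ⟪z, x⟫ := by
    intro n x
    induction n with
    | zero => simp
    | succ n ih =>
      rw [pow_succ', mul_apply_eq_comp, ← ContinuousLinearMap.adjoint_inner_left, hz,
        inner_smul_left, ih, Complex.conj_conj, pow_succ', mul_assoc]
  induction p using Finsupp.induction_linear with
  | zero => simp
  | add p q hp hq => simp only [map_add, Submodule.coe_add, inner_add_right, hp, hq]
  | single n x =>
    rw [evalOp_single, evalPoint_single, Submodule.coe_smul, inner_smul_right,
      ContinuousLinearMap.toLinearMap_pow_apply, hpow]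

theorem stmt_8_general (T : H →L[ℂ] H) (hT : WSP T)
    (w : ℂ) (hw : IsBPE T w) :
    (⨆ n : ℕ, (kerAdj T).map ((((T - w • (1 : H →L[ℂ] H)) ^ n : H →L[ℂ] H)) : H →ₗ[ℂ] H)).topologicalClosure = ⊤ ∧
    ∀ y ∈ LinearMap.ker (((ContinuousLinearMap.adjoint T - (starRingEnd ℂ w) • (1 : H →L[ℂ] H)) : H →L[ℂ] H) : H →ₗ[ℂ] H),
      ∃ x ∈ kerAdj T, x - y ∈
        (LinearMap.ker (((ContinuousLinearMap.adjoint T - (starRingEnd ℂ w) • (1 : H →L[ℂ] H)) : H →L[ℂ] H) : H →ₗ[ℂ] H))ᗮ := by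
  refine ⟨?_, fun y _ => ?_⟩
  · rw [WSP] at hT
    simp only [ContinuousLinearMap.toLinearMap_pow] at hT ⊢
    rwa [ContinuousLinearMap.toLinearMap_sub, ContinuousLinearMap.toLinearMap_smul,
      ContinuousLinearMap.toLinearMap_one, Module.End.iSup_map_pow_sub_smul_one]
  obtain ⟨E, hE⟩ := hw.exists_isEval hT
  refine ⟨E y, hE.1 y, (Submodule.mem_orthogonal _ _).2 fun z hz => ?_⟩
  have hz' : ContinuousLinearMap.adjoint T z = starRingEnd ℂ w • z := by
    simpa [sub_eq_zero] using hz
  refine hT.denseRange_evalOp.induction_on (p := fun y => ⟪z, E y - y⟫ = 0) y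
    (isClosed_eq (by fun_prop) continuous_const) fun p => ?_
  rw [inner_sub_right, hE.apply_evalOp, inner_evalOp_eq_inner_evalPoint hz', sub_self]

/-- if `w` is a bounded point evaluation then `H` is the closed span of
`⋃ₙ (T - w)ⁿ (ker T*)`, and the orthogonal projection `P_w` maps `ker T*` onto
`ker(T* - w̄)`. -/
theorem stmt_8 [TopologicalSpace.SeparableSpace H] (T : H →L[ℂ] H) (hT : WSP T)
    (w : ℂ) (hw : IsBPE T w) :
    (⨆ n : ℕ, (kerAdj T).map ((((T - w • (1 : H →L[ℂ] H)) ^ n : H →L[ℂ] H)) : H →ₗ[ℂ] H)).topologicalClosure = ⊤ ∧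
    ∀ y ∈ LinearMap.ker (((ContinuousLinearMap.adjoint T - (starRingEnd ℂ w) • (1 : H →L[ℂ] H)) : H →L[ℂ] H) : H →ₗ[ℂ] H),
      ∃ x ∈ kerAdj T, x - y ∈
        (LinearMap.ker (((ContinuousLinearMap.adjoint T - (starRingEnd ℂ w) • (1 : H →L[ℂ] H)) : H →L[ℂ] H) : H →ₗ[ℂ] H))ᗮ :=
  stmt_8_general T hT w hw
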